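/- arXiv:2510.00447 — 2 statements merged into one kernel-verified Lean document; each statement's English description precedes it below -/
import Mathlib

section
/- Let k ≥ 2 be an integer and let a_n⁺, a_n⁻ ∈ ℂ for n = 0,…,k−1. Set ψ = Σ_{n=0}^{k−1} (a_n⁺ e_{n,−(k−n)} + a_n⁻ e_{−(n+1),−(k−n)}) ∈ H. Then, as elements of H, H_{S¹,T} ψ (θ₁,θ₂) = ( a_{k−1}⁺ e^{−i(θ₁+θ₂)} e^{i(k−1)θ₁} + a_{k−1}⁻ e^{i(θ₁−θ₂)} e^{−ikθ₁} ) e^{−iθ₂} + ( e^{−iθ₁} + e^{i(θ₁+θ₂)} ) a₀⁺ e^{−ikθ₂} + ( e^{iθ₁} + e^{−i(θ₁−θ₂)} ) a₀⁻ e^{−iθ₁} e^{−ikθ₂} + 2cos(θ₁+θ₂) Σ_{n=1}^{k−2} a_n⁺ e^{inθ₁} e^{−i(k−n)θ₂} + 2cos(θ₁−θ₂) Σ_{n=1}^{k−2} a_n⁻ e^{−i(n+1)θ₁} e^{−i(k−n)θ₂} (for k = 2 the last two sums are empty). -/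
noncomputable section

/-- Fourier coefficient model of `L²((ℝ/2πℤ)²)`: trigonometric polynomials and more
general elements are described by their coefficient families `c : ℤ×ℤ → ℂ`,
`c ↔ Σ c(n,m) e^{i(nθ₁+mθ₂)}`. -/
abbrev Coef := (ℤ × ℤ) → ℂ

/-- The projection `P¹_M` (restriction of the first Fourier index to `M`). -/
def proj1 (S : ℤ → Prop) [DecidablePred S] (c : Coef) : Coef := fun p =>
  if S p.1 then c p else 0

/-- The projection `P²_M` (restriction of the second Fourier index to `M`). -/
def proj2 (S : ℤ → Prop) [DecidablePred S] (c : Coef) : Coef := fun p =>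
  if S p.2 then c p else 0

/-- Multiplication by `e^{i(aθ₁+bθ₂)}`, i.e. the shift of Fourier coefficients. -/
def Emul (a b : ℤ) (c : Coef) : Coef := fun p => c (p.1 - a, p.2 - b)

/-- `A₀ = E_{1,1}P¹_{(−∞,−1]} + E_{−1,1}P¹_{[1,∞)}`. -/
def opA0 (c : Coef) : Coef :=
  Emul 1 1 (proj1 (fun n => n ≤ -1) c) + Emul (-1) 1 (proj1 (fun n => 1 ≤ n) c)

/-- `A₊ = E_{−1,−1}P¹_{(−∞,0]} + E_{−1,1}P¹_{[1,∞)} + E_{1,1}P¹_{(−∞,−1]} + E_{1,−1}P¹_{[0,∞)}`. -/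
def opAplus (c : Coef) : Coef :=
  Emul (-1) (-1) (proj1 (fun n => n ≤ 0) c) + Emul (-1) 1 (proj1 (fun n => 1 ≤ n) c)
    + Emul 1 1 (proj1 (fun n => n ≤ -1) c) + Emul 1 (-1) (proj1 (fun n => 0 ≤ n) c)

/-- `A₋₁ = E_{1,−1}P¹_{(−∞,−2]} + E_{1,0}P¹_{{−1}} + E_{−1,0}P¹_{{0}} + E_{−1,−1}P¹_{[1,∞)}`. -/
def opAm1 (c : Coef) : Coef :=
  Emul 1 (-1) (proj1 (fun n => n ≤ -2) c) + Emul 1 0 (proj1 (fun n => n = -1) c)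
    + Emul (-1) 0 (proj1 (fun n => n = 0) c) + Emul (-1) (-1) (proj1 (fun n => 1 ≤ n) c)

/-- `A₋ = E_{−1,1}P¹_{(−∞,−1]} + E_{−1,0}P¹_{{0}} + E_{−1,−1}P¹_{[1,∞)}
       + E_{1,−1}P¹_{(−∞,−2]} + E_{1,0}P¹_{{−1}} + E_{1,1}P¹_{[0,∞)}`. -/
def opAminus (c : Coef) : Coef :=
  Emul (-1) 1 (proj1 (fun n => n ≤ -1) c) + Emul (-1) 0 (proj1 (fun n => n = 0) c)
    + Emul (-1) (-1) (proj1 (fun n => 1 ≤ n) c) + Emul 1 (-1) (proj1 (fun n => n ≤ -2) c)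
    + Emul 1 0 (proj1 (fun n => n = -1) c) + Emul 1 1 (proj1 (fun n => 0 ≤ n) c)

/-- The tunneling operator
`H_{S¹,T} = A₀ P²_{{0}} + A₊ P²_{[1,∞)} + A₋₁ P²_{{−1}} + A₋ P²_{(−∞,−2]}`. -/
def tunnelS1 (c : Coef) : Coef :=
  opA0 (proj2 (fun m => m = 0) c) + opAplus (proj2 (fun m => 1 ≤ m) c)
    + opAm1 (proj2 (fun m => m = -1) c) + opAminus (proj2 (fun m => m ≤ -2) c)

/-- Fourier coefficient of the single exponential `e_{n,m}(θ₁,θ₂) = e^{i(nθ₁+mθ₂)}`. -/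
def cdelta (n m : ℤ) : Coef := fun p => if p = (n, m) then 1 else 0

/-- The trigonometric polynomial with coefficients `c`, as a function of `(θ₁, θ₂)`. -/
def realize (c : Coef) (θ₁ θ₂ : ℝ) : ℂ :=
  ∑ᶠ p : ℤ × ℤ, c p * Complex.exp (Complex.I * ((p.1 : ℂ) * (θ₁ : ℂ) + (p.2 : ℂ) * (θ₂ : ℂ)))

/-!
On Fourier coefficients `H_{S¹,T}` acts by shifts. A basis vector `e_{n,n-k}` or
`e_{-(n+1),n-k}` of the fibre with `1 ≤ n ≤ k - 2` has second index `≤ -2`, so `A₋` sends it to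
the sum of its two diagonal neighbours, which is multiplication by `2 cos(θ₁ + θ₂)`, resp.
`2 cos(θ₁ - θ₂)`. Only the ends `n = 0` and `n = k - 1` (the latter with second index `-1`, where
`A₋₁` acts) lose a neighbour. Since all vectors involved are finite combinations of characters,
`realize` is linear on them and the identity reduces to merging exponentials.
-/

section Linearity

variable (S : ℤ → Prop) [DecidablePred S]

lemma proj1_add (c d : Coef) : proj1 S (c + d) = proj1 S c + proj1 S d := by
  funext p; simp only [proj1, Pi.add_apply]; split_ifs <;> simp

lemma proj2_add (c d : Coef) : proj2 S (c + d) = proj2 S c + proj2 S d := by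
  funext p; simp only [proj2, Pi.add_apply]; split_ifs <;> simp

lemma proj1_smul (x : ℂ) (c : Coef) : proj1 S (x • c) = x • proj1 S c := by
  funext p; simp only [proj1, Pi.smul_apply, smul_eq_mul]; split_ifs <;> simp

lemma proj2_smul (x : ℂ) (c : Coef) : proj2 S (x • c) = x • proj2 S c := by
  funext p; simp only [proj2, Pi.smul_apply, smul_eq_mul]; split_ifs <;> simp

lemma proj1_zero : proj1 S 0 = 0 := by
  funext p; simp [proj1]

end Linearity

lemma Emul_zero (a b : ℤ) : Emul a b 0 = 0 := rfl

lemma Emul_add (a b : ℤ) (c d : Coef) : Emul a b (c + d) = Emul a b c + Emul a b d := rfl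

lemma Emul_smul (a b : ℤ) (x : ℂ) (c : Coef) : Emul a b (x • c) = x • Emul a b c := rfl

def tunnelS1Linear : Coef →ₗ[ℂ] Coef where
  toFun := tunnelS1
  map_add' c d := by
    simp only [tunnelS1, opA0, opAplus, opAm1, opAminus, proj2_add, proj1_add, Emul_add]
    abel
  map_smul' x c := by
    simp only [tunnelS1, opA0, opAplus, opAm1, opAminus, proj2_smul, proj1_smul, Emul_smul,
      smul_add, RingHom.id_apply]

lemma tunnelS1_add (c d : Coef) : tunnelS1 (c + d) = tunnelS1 c + tunnelS1 d :=
  map_add tunnelS1Linear c d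

lemma tunnelS1_smul (x : ℂ) (c : Coef) : tunnelS1 (x • c) = x • tunnelS1 c :=
  map_smul tunnelS1Linear x c

lemma tunnelS1_sum {ι : Type*} (s : Finset ι) (f : ι → Coef) :
    tunnelS1 (∑ i ∈ s, f i) = ∑ i ∈ s, tunnelS1 (f i) :=
  map_sum tunnelS1Linear f s

section Basis

variable (S : ℤ → Prop) [DecidablePred S]

lemma proj2_cdelta (n m : ℤ) : proj2 S (cdelta n m) = if S m then cdelta n m else 0 := by
  funext ⟨x, y⟩
  split_ifs <;> simp only [proj2, cdelta, Prod.mk.injEq, Pi.zero_apply] <;>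
    split_ifs <;> grind

lemma Emul_proj1_cdelta (a b n m : ℤ) :
    Emul a b (proj1 S (cdelta n m)) = if S n then cdelta (n + a) (m + b) else 0 := by
  funext ⟨x, y⟩
  split_ifs <;> simp only [Emul, proj1, cdelta, Prod.mk.injEq, Pi.zero_apply] <;>
    split_ifs <;> grind

end Basis

lemma tunnelS1_cdelta_of_le_neg_two {n m : ℤ} (hm : m ≤ -2) :
    tunnelS1 (cdelta n m) = opAminus (cdelta n m) := by
  simp [tunnelS1, proj2_cdelta, hm, show m ≠ 0 by omega, show ¬ 1 ≤ m by omega,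
    show m ≠ -1 by omega, opA0, opAplus, opAm1, proj1_zero, Emul_zero]

lemma tunnelS1_cdelta_neg_one (n : ℤ) :
    tunnelS1 (cdelta n (-1)) = opAm1 (cdelta n (-1)) := by
  simp [tunnelS1, proj2_cdelta, opA0, opAplus, opAminus, proj1_zero, Emul_zero]

lemma opAminus_cdelta_of_pos {n m : ℤ} (hn : 1 ≤ n) :
    opAminus (cdelta n m) = cdelta (n - 1) (m - 1) + cdelta (n + 1) (m + 1) := by
  simp [opAminus, Emul_proj1_cdelta, hn, show ¬ n ≤ -1 by omega, show n ≠ 0 by omega,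
    show ¬ n ≤ -2 by omega, show n ≠ -1 by omega, show 0 ≤ n by omega, sub_eq_add_neg]

lemma opAminus_cdelta_zero (m : ℤ) :
    opAminus (cdelta 0 m) = cdelta (-1) m + cdelta 1 (m + 1) := by
  simp [opAminus, Emul_proj1_cdelta]

lemma opAminus_cdelta_neg_one (m : ℤ) :
    opAminus (cdelta (-1) m) = cdelta (-2) (m + 1) + cdelta 0 m := by
  simp [opAminus, Emul_proj1_cdelta]

lemma opAminus_cdelta_of_le_neg_two {n m : ℤ} (hn : n ≤ -2) :
    opAminus (cdelta n m) = cdelta (n - 1) (m + 1) + cdelta (n + 1) (m - 1) := by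
  simp [opAminus, Emul_proj1_cdelta, hn, show n ≤ -1 by omega, show n ≠ 0 by omega,
    show ¬ 1 ≤ n by omega, show n ≠ -1 by omega, show ¬ 0 ≤ n by omega, sub_eq_add_neg]

lemma opAm1_cdelta_of_pos {n m : ℤ} (hn : 1 ≤ n) :
    opAm1 (cdelta n m) = cdelta (n - 1) (m - 1) := by
  simp [opAm1, Emul_proj1_cdelta, hn, show ¬ n ≤ -2 by omega, show n ≠ 0 by omega,
    show n ≠ -1 by omega, sub_eq_add_neg]

lemma opAm1_cdelta_of_le_neg_two {n m : ℤ} (hn : n ≤ -2) :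
    opAm1 (cdelta n m) = cdelta (n + 1) (m - 1) := by
  simp [opAm1, Emul_proj1_cdelta, hn, show n ≠ 0 by omega,
    show n ≠ -1 by omega, show ¬ 1 ≤ n by omega, sub_eq_add_neg]

lemma tunnelS1_fiber (k : ℤ) (hk : 2 ≤ k) (ap am : ℤ → ℂ) :
    tunnelS1 (∑ n ∈ Finset.Icc (0 : ℤ) (k - 1),
        (ap n • cdelta n (n - k) + am n • cdelta (-(n + 1)) (n - k)))
      = (ap 0 • (cdelta (-1) (-k) + cdelta 1 (1 - k))
          + am 0 • (cdelta (-2) (1 - k) + cdelta 0 (-k)))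
        + ((ap (k - 1) • cdelta (k - 2) (-2) + am (k - 1) • cdelta (1 - k) (-2))
          + ∑ n ∈ Finset.Icc (1 : ℤ) (k - 2),
            (ap n • (cdelta (n - 1) (n - k - 1) + cdelta (n + 1) (n - k + 1))
              + am n • (cdelta (-(n + 1) - 1) (n - k + 1)
                + cdelta (-(n + 1) + 1) (n - k - 1)))) := by
  have hsplit : Finset.Icc (0 : ℤ) (k - 1)
      = insert 0 (insert (k - 1) (Finset.Icc (1 : ℤ) (k - 2))) := by
    ext x; simp only [Finset.mem_Icc, Finset.mem_insert]; omega
  rw [tunnelS1_sum, hsplit, Finset.sum_insert (by simp; omega),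
    Finset.sum_insert (by simp; omega)]
  congr 1
  · simp only [tunnelS1_add, tunnelS1_smul, zero_sub, zero_add]
    rw [tunnelS1_cdelta_of_le_neg_two (by omega), tunnelS1_cdelta_of_le_neg_two (by omega),
      opAminus_cdelta_zero, opAminus_cdelta_neg_one]
    congr 4 <;> omega
  congr 1
  · simp only [tunnelS1_add, tunnelS1_smul, sub_sub_cancel_left]
    rw [tunnelS1_cdelta_neg_one, tunnelS1_cdelta_neg_one, opAm1_cdelta_of_pos (by omega),
      opAm1_cdelta_of_le_neg_two (by omega)]
    congr 3 <;> omega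
  refine Finset.sum_congr rfl fun n hn => ?_
  rw [Finset.mem_Icc] at hn
  rw [tunnelS1_add, tunnelS1_smul, tunnelS1_smul, tunnelS1_cdelta_of_le_neg_two (by omega),
    tunnelS1_cdelta_of_le_neg_two (by omega), opAminus_cdelta_of_pos (by omega),
    opAminus_cdelta_of_le_neg_two (by omega)]

def torusChar (θ₁ θ₂ : ℝ) (p : ℤ × ℤ) : ℂ :=
  Complex.exp (Complex.I * ((p.1 : ℂ) * (θ₁ : ℂ) + (p.2 : ℂ) * (θ₂ : ℂ)))

lemma cdelta_eq_single (n m : ℤ) : cdelta n m = ⇑(Finsupp.single (n, m) (1 : ℂ)) := by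
  funext p; simp [cdelta, Finsupp.single_apply, eq_comm]

lemma realize_coe_finsupp (f : (ℤ × ℤ) →₀ ℂ) (θ₁ θ₂ : ℝ) :
    realize f θ₁ θ₂ = Finsupp.linearCombination ℂ (torusChar θ₁ θ₂) f := by
  rw [realize, finsum_eq_sum_of_support_subset _ (s := f.support), Finsupp.linearCombination_apply,
    Finsupp.sum]
  · rfl
  · intro p hp; simp_all

/-- action of `H_{S¹,T}` on the fiber `L_{2k−1}`. -/
theorem stmt13 (k : ℤ) (hk : 2 ≤ k) (ap am : ℤ → ℂ) (θ₁ θ₂ : ℝ) :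
    realize (tunnelS1 (∑ n ∈ Finset.Icc (0 : ℤ) (k - 1),
        (ap n • cdelta n (n - k) + am n • cdelta (-(n + 1)) (n - k)))) θ₁ θ₂
      = (ap (k - 1) * Complex.exp (-(Complex.I * ((θ₁ : ℂ) + (θ₂ : ℂ))))
            * Complex.exp (Complex.I * (((k : ℂ) - 1) * (θ₁ : ℂ)))
          + am (k - 1) * Complex.exp (Complex.I * ((θ₁ : ℂ) - (θ₂ : ℂ)))
            * Complex.exp (-(Complex.I * ((k : ℂ) * (θ₁ : ℂ)))))
          * Complex.exp (-(Complex.I * (θ₂ : ℂ)))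
        + (Complex.exp (-(Complex.I * (θ₁ : ℂ)))
            + Complex.exp (Complex.I * ((θ₁ : ℂ) + (θ₂ : ℂ))))
            * ap 0 * Complex.exp (-(Complex.I * ((k : ℂ) * (θ₂ : ℂ))))
        + (Complex.exp (Complex.I * (θ₁ : ℂ))
            + Complex.exp (-(Complex.I * ((θ₁ : ℂ) - (θ₂ : ℂ)))))
            * am 0 * Complex.exp (-(Complex.I * (θ₁ : ℂ)))
            * Complex.exp (-(Complex.I * ((k : ℂ) * (θ₂ : ℂ))))
        + 2 * Complex.cos ((θ₁ : ℂ) + (θ₂ : ℂ))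
            * ∑ n ∈ Finset.Icc (1 : ℤ) (k - 2), ap n
                * Complex.exp (Complex.I * ((n : ℂ) * (θ₁ : ℂ)))
                * Complex.exp (-(Complex.I * (((k : ℂ) - (n : ℂ)) * (θ₂ : ℂ))))
        + 2 * Complex.cos ((θ₁ : ℂ) - (θ₂ : ℂ))
            * ∑ n ∈ Finset.Icc (1 : ℤ) (k - 2), am n
                * Complex.exp (-(Complex.I * (((n : ℂ) + 1) * (θ₁ : ℂ))))
                * Complex.exp (-(Complex.I * (((k : ℂ) - (n : ℂ)) * (θ₂ : ℂ)))) := by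
  rw [tunnelS1_fiber k hk ap am]
  simp only [cdelta_eq_single, ← Finsupp.coe_smul, ← Finsupp.coe_add, ← Finsupp.coe_finsetSum,
    realize_coe_finsupp, map_add, map_smul, map_sum, Finsupp.linearCombination_single,
    smul_eq_mul, torusChar]
  simp only [Complex.two_cos, add_mul, mul_add, Finset.mul_sum, Finset.sum_add_distrib, mul_assoc,
    ← Complex.exp_add, mul_left_comm (Complex.exp _) (ap _), mul_left_comm (Complex.exp _) (am _)]
  push_cast
  ring_nf
end
end

section
/- Let C ≠ 0 and α ∈ ℝ. Suppose either (even case) q = 0, k ≥ 2 is an integer, a₀, a_n⁺, a_n⁻ ∈ ℂ for n = 1,…,k−1, and ψ = Σ_{n=1}^{k−1}(a_n⁺ e_{n,k−n} + a_n⁻ e_{−n,k−n}) + a₀ e_{0,k}; or (odd case) q = −1, k ≥ 2, a_n⁺, a_n⁻ ∈ ℂ for n = 0,…,k−2, and ψ = Σ_{n=0}^{k−2}(a_n⁺ e_{n,−(k−n)} + a_n⁻ e_{−(n+1),−(k−n)}). Then H_{S¹}ψ is a trigonometric polynomial whose restriction to θ₂ = 0 satisfies, for all θ, (H_{S¹}ψ)(θ,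 0) = (2/C)·(−i d/dθ)²[ψ(·,0)](θ) − 2α cos(θ)·ψ(θ, 0), where ψ(·,0) denotes the trigonometric polynomial θ ↦ ψ(θ,0); that is, the restricted action of H_{S¹} is the Mathieu operator (2/C)(−i d/dθ)² − 2α cos θ. -/
noncomputable section

/-- The kinetic part: `e_{n,m} ↦ (1/(2C))(2n+q)² e_{n,m}` if `m ≥ 0`,
`e_{n,m} ↦ (1/(2C))(2n+1+q)² e_{n,m}` if `m ≤ −1`. -/
def kinS1 (C q : ℝ) (c : Coef) : Coef := fun p =>
  if 0 ≤ p.2 then ((1 / (2 * C) * (2 * (p.1 : ℝ) + q) ^ 2 : ℝ) : ℂ) * c p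
  else ((1 / (2 * C) * (2 * (p.1 : ℝ) + 1 + q) ^ 2 : ℝ) : ℂ) * c p

/-- The Josephson junction Hamiltonian
`H_{S¹} = (1/(2C))(−2i∂_{θ₁}+q)² P²_{[0,∞)} + (1/(2C))(−2i∂_{θ₁}+1+q)² P²_{(−∞,−1]} − α H_{S¹,T}`. -/
def hamS1 (C q α : ℝ) (c : Coef) : Coef := kinS1 C q c - (α : ℂ) • tunnelS1 c

/-- The first-order differential operator `−i d/dθ`. -/
def Mop (g : ℝ → ℂ) : ℝ → ℂ := fun t => -Complex.I * deriv g t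

/-- The fiber vector of `L_{2k}` with `a_k^± = 0` (even case). -/
def evenPsi (k : ℤ) (a0 : ℂ) (ap am : ℤ → ℂ) : Coef :=
  (∑ n ∈ Finset.Icc (1 : ℤ) (k - 1), ap n • cdelta n (k - n))
    + (∑ n ∈ Finset.Icc (1 : ℤ) (k - 1), am n • cdelta (-n) (k - n))
    + a0 • cdelta 0 k

/-- The fiber vector of `L_{2k−1}` with `a_{k−1}^± = 0` (odd case). -/
def oddPsi (k : ℤ) (ap am : ℤ → ℂ) : Coef :=
  ∑ n ∈ Finset.Icc (0 : ℤ) (k - 2),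
    (ap n • cdelta n (n - k) + am n • cdelta (-(n + 1)) (n - k))

/-! On these fibres only the block `A₊` (second frequency `m ≥ 1`, even case) or `A₋`
(`m ≤ -2`, odd case) of the tunneling operator acts. After setting `θ₂ = 0` every `E_{±1,b}`
becomes multiplication by `e^{±iθ}`, and the `P¹` projections accompanying each sign of the shift
partition `ℤ`, so the block acts as `e^{-iθ} + e^{iθ} = 2 cos θ`. On the same frequencies the
kinetic symbol is `(2n)²/(2C) = (2/C) n²` (for `q = 0`, resp. `q = -1`), that of
`(2/C)(−i d/dθ)²`. -/

open Complex Function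

def finSupportedIn (s : Set (ℤ × ℤ)) : Submodule ℂ Coef where
  carrier := {c | c.HasFiniteSupport ∧ c.support ⊆ s}
  add_mem' hc hc' := ⟨hc.1.add hc'.1, (support_add _ _).trans (Set.union_subset hc.2 hc'.2)⟩
  zero_mem' := ⟨by simp [HasFiniteSupport], by simp⟩
  smul_mem' a _ hc :=
    ⟨hc.1.subset (support_const_smul_subset a _), (support_const_smul_subset a _).trans hc.2⟩

lemma cdelta_mem_finSupportedIn {s : Set (ℤ × ℤ)} {n m : ℤ} (h : (n, m) ∈ s) :
    cdelta n m ∈ finSupportedIn s := by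
  have hsupp : (cdelta n m).support = {(n, m)} := by
    ext p; by_cases hp : p = (n, m) <;> simp [cdelta, hp]
  exact ⟨by simp [HasFiniteSupport, hsupp], by simpa [hsupp]⟩

section realize

variable {c c' : Coef}

lemma realize_add (hc : c.HasFiniteSupport) (hc' : c'.HasFiniteSupport) (θ₁ θ₂ : ℝ) :
    realize (c + c') θ₁ θ₂ = realize c θ₁ θ₂ + realize c' θ₁ θ₂ := by
  simp only [realize, Pi.add_apply, add_mul]
  exact finsum_add_distrib (hc.mul_left _) (hc'.mul_left _)

lemma realize_sub (hc : c.HasFiniteSupport) (hc' : c'.HasFiniteSupport) (θ₁ θ₂ : ℝ) :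
    realize (c - c') θ₁ θ₂ = realize c θ₁ θ₂ - realize c' θ₁ θ₂ := by
  simp only [realize, Pi.sub_apply, sub_mul]
  exact finsum_sub_distrib (hc.mul_left _) (hc'.mul_left _)

lemma realize_smul (a : ℂ) (c : Coef) (θ₁ θ₂ : ℝ) :
    realize (a • c) θ₁ θ₂ = a * realize c θ₁ θ₂ := by
  simp only [realize, mul_finsum, Pi.smul_apply, smul_eq_mul, mul_assoc]

lemma realize_Emul (a b : ℤ) (c : Coef) (θ₁ θ₂ : ℝ) :
    realize (Emul a b c) θ₁ θ₂ = exp (I * ((a : ℂ) * θ₁ + (b : ℂ) * θ₂)) * realize c θ₁ θ₂ := by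
  rw [realize, realize, mul_finsum, ← finsum_comp_equiv (Equiv.addRight (a, b))]
  refine finsum_congr fun p => ?_
  simp only [Emul, Equiv.coe_addRight, Prod.fst_add, Prod.snd_add, add_sub_cancel_right,
    Prod.mk.eta, Int.cast_add]
  rw [mul_left_comm, ← exp_add]
  ring_nf

end realize

section finiteSupport

variable {c : Coef}

lemma hasFiniteSupport_proj1 (S : ℤ → Prop) [DecidablePred S] (hc : c.HasFiniteSupport) :
    (proj1 S c).HasFiniteSupport :=
  hc.subset fun p hp => by by_contra h; simp_all [proj1]

lemma hasFiniteSupport_Emul (a b : ℤ) (hc : c.HasFiniteSupport) :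
    (Emul a b c).HasFiniteSupport :=
  hc.comp_of_injective (f := c) (g := Prod.map (· - a) (· - b))
    (sub_left_injective.prodMap sub_left_injective)

lemma hasFiniteSupport_Emul_proj1 (a b : ℤ) (S : ℤ → Prop) [DecidablePred S]
    (hc : c.HasFiniteSupport) : (Emul a b (proj1 S c)).HasFiniteSupport :=
  hasFiniteSupport_Emul a b (hasFiniteSupport_proj1 S hc)

lemma hasFiniteSupport_opAplus (hc : c.HasFiniteSupport) : (opAplus c).HasFiniteSupport := by
  have hE := fun a b S [DecidablePred S] => hasFiniteSupport_Emul_proj1 a b S hc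
  exact (((hE ..).add (hE ..)).add (hE ..)).add (hE ..)

lemma hasFiniteSupport_opAminus (hc : c.HasFiniteSupport) : (opAminus c).HasFiniteSupport := by
  have hE := fun a b S [DecidablePred S] => hasFiniteSupport_Emul_proj1 a b S hc
  exact (((((hE ..).add (hE ..)).add (hE ..)).add (hE ..)).add (hE ..)).add (hE ..)

end finiteSupport

section proj1

variable (S T : ℤ → Prop) [DecidablePred S] [DecidablePred T] (c : Coef)

lemma proj1_add_proj1 (hST : ∀ n, ¬(S n ∧ T n)) :
    proj1 S c + proj1 T c = proj1 (fun n => S n ∨ T n) c := by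
  funext p
  have := hST p.1
  by_cases hS : S p.1 <;> by_cases hT : T p.1 <;> simp_all [proj1]

lemma proj1_of_forall (h : ∀ n, S n) : proj1 S c = c := by
  funext p
  simp [proj1, h]

end proj1

lemma realize_proj1_add_proj1 (S T : ℤ → Prop) [DecidablePred S] [DecidablePred T] {c : Coef}
    (hc : c.HasFiniteSupport) (hST : ∀ n, ¬(S n ∧ T n)) (θ₁ θ₂ : ℝ) :
    realize (proj1 S c) θ₁ θ₂ + realize (proj1 T c) θ₁ θ₂
      = realize (proj1 (fun n => S n ∨ T n) c) θ₁ θ₂ := by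
  rw [← realize_add (hasFiniteSupport_proj1 S hc) (hasFiniteSupport_proj1 T hc),
    proj1_add_proj1 S T c hST]

lemma realize_proj1_add_proj1_of_iff_not (S T : ℤ → Prop) [DecidablePred S] [DecidablePred T]
    {c : Coef} (hc : c.HasFiniteSupport) (hST : ∀ n, S n ↔ ¬T n) (θ₁ θ₂ : ℝ) :
    realize (proj1 S c) θ₁ θ₂ + realize (proj1 T c) θ₁ θ₂ = realize c θ₁ θ₂ := by
  rw [realize_proj1_add_proj1 S T hc (fun n => by simp [hST n]),
    proj1_of_forall _ c (fun n => by by_cases h : T n <;> simp [hST n, h])]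

lemma realize_opAplus {c : Coef} (hc : c.HasFiniteSupport) (θ : ℝ) :
    realize (opAplus c) θ 0 = 2 * cos θ * realize c θ 0 := by
  have hE := fun a b S [DecidablePred S] => hasFiniteSupport_Emul_proj1 a b S hc
  have hdown := realize_proj1_add_proj1_of_iff_not (· ≤ 0) (1 ≤ ·) hc (by omega) θ 0
  have hup := realize_proj1_add_proj1_of_iff_not (· ≤ -1) (0 ≤ ·) hc (by omega) θ 0
  rw [opAplus, realize_add (((hE ..).add (hE ..)).add (hE ..)) (hE ..),
    realize_add ((hE ..).add (hE ..)) (hE ..), realize_add (hE ..) (hE ..)]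
  simp only [realize_Emul, two_cos]
  push_cast
  ring_nf
  linear_combination cexp (-(I * θ)) * hdown + cexp (I * θ) * hup

lemma realize_opAminus {c : Coef} (hc : c.HasFiniteSupport) (θ : ℝ) :
    realize (opAminus c) θ 0 = 2 * cos θ * realize c θ 0 := by
  have hE := fun a b S [DecidablePred S] => hasFiniteSupport_Emul_proj1 a b S hc
  have hdown := realize_proj1_add_proj1 (· ≤ -1) (· = 0) hc (by omega) θ 0
  have hdown' := realize_proj1_add_proj1_of_iff_not (fun n => n ≤ -1 ∨ n = 0) (1 ≤ ·) hc
    (by omega) θ 0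
  have hup := realize_proj1_add_proj1 (· ≤ -2) (· = -1) hc (by omega) θ 0
  have hup' := realize_proj1_add_proj1_of_iff_not (fun n => n ≤ -2 ∨ n = -1) (0 ≤ ·) hc
    (by omega) θ 0
  rw [opAminus,
    realize_add (((((hE ..).add (hE ..)).add (hE ..)).add (hE ..)).add (hE ..)) (hE ..),
    realize_add ((((hE ..).add (hE ..)).add (hE ..)).add (hE ..)) (hE ..),
    realize_add (((hE ..).add (hE ..)).add (hE ..)) (hE ..),
    realize_add ((hE ..).add (hE ..)) (hE ..), realize_add (hE ..) (hE ..)]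
  simp only [realize_Emul, two_cos]
  push_cast
  ring_nf
  linear_combination cexp (-(I * θ)) * (hdown + hdown') + cexp (I * θ) * (hup + hup')

def fstMul (c : Coef) : Coef := fun p => (p.1 : ℂ) * c p

lemma hasFiniteSupport_fstMul {c : Coef} (hc : c.HasFiniteSupport) :
    (fstMul c).HasFiniteSupport :=
  hc.mul_right _

lemma hasDerivAt_cexp_I_mul_add (n : ℤ) (b : ℂ) (t : ℝ) :
    HasDerivAt (fun t : ℝ => exp (I * ((n : ℂ) * t + b)))
      (I * n * exp (I * ((n : ℂ) * t + b))) t := by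
  have h := (((hasDerivAt_id (t : ℂ)).const_mul (n : ℂ)).add_const b).const_mul I |>.cexp
  simpa [mul_comm, mul_left_comm] using h.comp_ofReal

lemma Mop_realize {c : Coef} (hc : c.HasFiniteSupport) (θ₂ : ℝ) :
    Mop (fun t => realize c t θ₂) = fun t => realize (fstMul c) t θ₂ := by
  let s := hc.toFinset
  have hsum : ∀ d : Coef, d.support ⊆ c.support → ∀ t : ℝ, realize d t θ₂
      = ∑ p ∈ s, d p * exp (I * ((p.1 : ℂ) * t + (p.2 : ℂ) * θ₂)) := fun d hd t =>
    finsum_eq_sum_of_support_subset_of_finite _ ((support_mul_subset_left _ _).trans hd) hc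
  funext t
  have hderiv : HasDerivAt (fun t => realize c t θ₂)
      (∑ p ∈ s, c p * (I * p.1 * exp (I * ((p.1 : ℂ) * t + (p.2 : ℂ) * θ₂)))) t := by
    simp only [hsum c subset_rfl]
    exact HasDerivAt.fun_sum fun p _ => (hasDerivAt_cexp_I_mul_add p.1 _ t).const_mul (c p)
  rw [Mop, hderiv.deriv, hsum (fstMul c) (support_mul_subset_right _ _), Finset.mul_sum]
  refine Finset.sum_congr rfl fun p _ => ?_
  simp only [fstMul]
  ring_nf
  rw [I_sq]
  ring

section supportSnd

variable (S : ℤ → Prop) [DecidablePred S] {c : Coef}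

lemma proj2_eq_self (h : ∀ p ∈ c.support, S p.2) : proj2 S c = c := by
  funext p
  by_cases hp : c p = 0
  · simp [proj2, hp]
  · simp [proj2, h p hp]

lemma proj2_eq_zero (h : ∀ p ∈ c.support, ¬S p.2) : proj2 S c = 0 := by
  funext p
  by_cases hp : c p = 0
  · simp [proj2, hp]
  · simp [proj2, h p hp]

end supportSnd

lemma tunnelS1_eq_opAplus {c : Coef} (h : ∀ p ∈ c.support, 1 ≤ p.2) :
    tunnelS1 c = opAplus c := by
  rw [tunnelS1, proj2_eq_self _ h, proj2_eq_zero (· = 0) fun p hp => by grind,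
    proj2_eq_zero (· = -1) fun p hp => by grind, proj2_eq_zero (· ≤ -2) fun p hp => by grind]
  funext p
  simp [opA0, opAm1, opAminus, proj1, Emul]

lemma tunnelS1_eq_opAminus {c : Coef} (h : ∀ p ∈ c.support, p.2 ≤ -2) :
    tunnelS1 c = opAminus c := by
  rw [tunnelS1, proj2_eq_self (· ≤ -2) h, proj2_eq_zero (· = 0) fun p hp => by grind,
    proj2_eq_zero (· = -1) fun p hp => by grind, proj2_eq_zero (1 ≤ ·) fun p hp => by grind]
  funext p
  simp [opA0, opAm1, opAplus, proj1, Emul]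

lemma kinS1_zero_eq_fstMul {C : ℝ} {c : Coef} (h : ∀ p ∈ c.support, 0 ≤ p.2) :
    kinS1 C 0 c = ((2 / C : ℝ) : ℂ) • fstMul (fstMul c) := by
  funext p
  by_cases hp : c p = 0
  · simp [kinS1, fstMul, hp]
  · simp only [kinS1, fstMul, if_pos (h p hp), Pi.smul_apply, smul_eq_mul]
    push_cast
    ring

lemma kinS1_neg_one_eq_fstMul {C : ℝ} {c : Coef} (h : ∀ p ∈ c.support, p.2 < 0) :
    kinS1 C (-1) c = ((2 / C : ℝ) : ℂ) • fstMul (fstMul c) := by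
  funext p
  by_cases hp : c p = 0
  · simp [kinS1, fstMul, hp]
  · simp only [kinS1, fstMul, if_neg (not_le.2 (h p hp)), Pi.smul_apply, smul_eq_mul]
    push_cast
    ring

def mathieuOp (C α : ℝ) (f : ℝ → ℂ) (θ : ℝ) : ℂ :=
  ((2 / C : ℝ) : ℂ) * Mop (Mop f) θ - 2 * (α : ℂ) * cos (θ : ℂ) * f θ

lemma realize_hamS1_eq_mathieuOp {C q α θ : ℝ} {c : Coef} (hc : c.HasFiniteSupport)
    (hkin : kinS1 C q c = ((2 / C : ℝ) : ℂ) • fstMul (fstMul c))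
    (htunFS : (tunnelS1 c).HasFiniteSupport)
    (htun : realize (tunnelS1 c) θ 0 = 2 * cos θ * realize c θ 0) :
    realize (hamS1 C q α c) θ 0 = mathieuOp C α (fun t => realize c t 0) θ := by
  have hkinFS : (kinS1 C q c).HasFiniteSupport := by
    rw [hkin]
    exact (hasFiniteSupport_fstMul (hasFiniteSupport_fstMul hc)).subset
      (support_const_smul_subset _ _)
  rw [hamS1, realize_sub hkinFS (htunFS.subset (support_const_smul_subset _ _)), realize_smul,
    htun, hkin, realize_smul, mathieuOp, Mop_realize hc, Mop_realize (hasFiniteSupport_fstMul hc)]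
  ring

theorem realize_hamS1_zero_eq_mathieuOp {C α : ℝ} {c : Coef}
    (hc : c ∈ finSupportedIn {p | 1 ≤ p.2}) (θ : ℝ) :
    realize (hamS1 C 0 α c) θ 0 = mathieuOp C α (fun t => realize c t 0) θ := by
  have hsupp : ∀ p ∈ c.support, 1 ≤ p.2 := fun p hp => hc.2 hp
  refine realize_hamS1_eq_mathieuOp hc.1 (kinS1_zero_eq_fstMul fun p hp => by grind) ?_ ?_
  · exact tunnelS1_eq_opAplus hsupp ▸ hasFiniteSupport_opAplus hc.1
  · rw [tunnelS1_eq_opAplus hsupp, realize_opAplus hc.1]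

theorem realize_hamS1_neg_one_eq_mathieuOp {C α : ℝ} {c : Coef}
    (hc : c ∈ finSupportedIn {p | p.2 ≤ -2}) (θ : ℝ) :
    realize (hamS1 C (-1) α c) θ 0 = mathieuOp C α (fun t => realize c t 0) θ := by
  have hsupp : ∀ p ∈ c.support, p.2 ≤ -2 := fun p hp => hc.2 hp
  refine realize_hamS1_eq_mathieuOp hc.1 (kinS1_neg_one_eq_fstMul fun p hp => by grind) ?_ ?_
  · exact tunnelS1_eq_opAminus hsupp ▸ hasFiniteSupport_opAminus hc.1
  · rw [tunnelS1_eq_opAminus hsupp, realize_opAminus hc.1]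

lemma evenPsi_mem_finSupportedIn {k : ℤ} (hk : 1 ≤ k) (a0 : ℂ) (ap am : ℤ → ℂ) :
    evenPsi k a0 ap am ∈ finSupportedIn {p | 1 ≤ p.2} := by
  have hmem : ∀ n m, 1 ≤ m → cdelta n m ∈ finSupportedIn {p | 1 ≤ p.2} :=
    fun n m hm => cdelta_mem_finSupportedIn hm
  refine add_mem (add_mem ?_ ?_) (Submodule.smul_mem _ _ (hmem _ _ hk)) <;>
    exact Submodule.sum_mem _ fun n hn =>
      Submodule.smul_mem _ _ (hmem _ _ (by rw [Finset.mem_Icc] at hn; omega))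

lemma oddPsi_mem_finSupportedIn (k : ℤ) (ap am : ℤ → ℂ) :
    oddPsi k ap am ∈ finSupportedIn {p | p.2 ≤ -2} := by
  refine Submodule.sum_mem _ fun n hn => add_mem ?_ ?_ <;>
    exact Submodule.smul_mem _ _
      (cdelta_mem_finSupportedIn (by rw [Finset.mem_Icc] at hn; show n - k ≤ -2; omega))

theorem stmt15_general (C α : ℝ) :
    (∀ k : ℤ, 2 ≤ k → ∀ (a0 : ℂ) (ap am : ℤ → ℂ) (θ : ℝ),
      realize (hamS1 C 0 α (evenPsi k a0 ap am)) θ 0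
        = ((2 / C : ℝ) : ℂ) * Mop (Mop (fun t => realize (evenPsi k a0 ap am) t 0)) θ
          - 2 * (α : ℂ) * Complex.cos (θ : ℂ) * realize (evenPsi k a0 ap am) θ 0) ∧
    (∀ k : ℤ, 2 ≤ k → ∀ (ap am : ℤ → ℂ) (θ : ℝ),
      realize (hamS1 C (-1) α (oddPsi k ap am)) θ 0
        = ((2 / C : ℝ) : ℂ) * Mop (Mop (fun t => realize (oddPsi k ap am) t 0)) θ
          - 2 * (α : ℂ) * Complex.cos (θ : ℂ) * realize (oddPsi k ap am) θ 0) :=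
  ⟨fun _ hk a0 ap am θ =>
      realize_hamS1_zero_eq_mathieuOp (evenPsi_mem_finSupportedIn (by omega) a0 ap am) θ,
    fun k _ ap am θ => realize_hamS1_neg_one_eq_mathieuOp (oddPsi_mem_finSupportedIn k ap am) θ⟩

/-- on the fibers the restriction of `H_{S¹}` to `θ₂ = 0` is
the Mathieu operator `(2/C)(−i d/dθ)² − 2α cos θ`, for `q = 0` in the even case
and for `q = −1` in the odd case. -/
theorem stmt15 (C α : ℝ) (hC : C ≠ 0) :
    (∀ k : ℤ, 2 ≤ k → ∀ (a0 : ℂ) (ap am : ℤ → ℂ) (θ : ℝ),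
      realize (hamS1 C 0 α (evenPsi k a0 ap am)) θ 0
        = ((2 / C : ℝ) : ℂ) * Mop (Mop (fun t => realize (evenPsi k a0 ap am) t 0)) θ
          - 2 * (α : ℂ) * Complex.cos (θ : ℂ) * realize (evenPsi k a0 ap am) θ 0) ∧
    (∀ k : ℤ, 2 ≤ k → ∀ (ap am : ℤ → ℂ) (θ : ℝ),
      realize (hamS1 C (-1) α (oddPsi k ap am)) θ 0
        = ((2 / C : ℝ) : ℂ) * Mop (Mop (fun t => realize (oddPsi k ap am) t 0)) θ
          - 2 * (α : ℂ) * Complex.cos (θ : ℂ) * realize (oddPsi k ap am) θ 0) :=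
  stmt15_general C α
end
end
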